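/- Let H be a d×d complex Hermitian matrix with H² = I, and set U(θ) := exp(−i(θ/2)H). Then for every d×d complex matrix A (an observable) and every d×d matrix ρ (an initial state), the expectation value f(θ) := Tr[U(θ) ρ U(θ)† A] is differentiable with (d/dθ) f(θ) = (1/2)·( Tr[U(θ+π/2) ρ U(θ+π/2)† A] − Tr[U(θ−π/2) ρ U(θ−π/2)† A] ). -/

import Mathlib

open Matrix

/-- Pauli rotation `U(θ) = exp(-i(θ/2)H)` generated by a Hermitian involution `H`. -/
noncomputable def pauliRot {d : ℕ} (H : Matrix (Fin d) (Fin d) ℂ) (θ : ℝ) :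
    Matrix (Fin d) (Fin d) ℂ :=
  NormedSpace.exp ((-(Complex.I * (θ / 2 : ℂ))) • H)

set_option maxHeartbeats 1000000 in
lemma pauliRot_eq {d : ℕ} (H : Matrix (Fin d) (Fin d) ℂ) (hH2 : H ^ 2 = 1) (t : ℝ) :
    pauliRot H t = (Real.cos (t/2) : ℂ) • (1 : Matrix (Fin d) (Fin d) ℂ)
      - (Complex.I * Real.sin (t/2)) • H := by
  set z : ℂ := -(Complex.I * ((t : ℂ) / 2)) with hz
  have hzsq : z ^ 2 = -((t : ℂ)/2) ^ 2 := by
    rw [hz]; ring_nf; rw [Complex.I_sq]; ring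
  have hHe : ∀ k : ℕ, H ^ (2 * k) = 1 := fun k => by rw [pow_mul, hH2, one_pow]
  have hHo : ∀ k : ℕ, H ^ (2 * k + 1) = H := fun k => by
    rw [pow_succ, hHe, one_mul]
  rw [pauliRot, NormedSpace.exp_eq_tsum (𝕂 := ℂ), sub_eq_add_neg]
  refine HasSum.tsum_eq ?_
  have heven : HasSum (fun k : ℕ => (((2*k).factorial : ℂ))⁻¹ • (z • H) ^ (2*k))
      ((Real.cos (t/2) : ℂ) • (1 : Matrix (Fin d) (Fin d) ℂ)) := by
    have hc := (Complex.hasSum_cos ((t : ℂ)/2)).smul_const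
      (1 : Matrix (Fin d) (Fin d) ℂ)
    rw [Complex.ofReal_cos, Complex.ofReal_div, Complex.ofReal_ofNat]
    convert hc using 2 with k
    rw [smul_pow, hHe, smul_smul, pow_mul, hzsq]
    congr 1
    rw [neg_pow, ← pow_mul]
    ring
  have hodd : HasSum (fun k : ℕ => (((2*k+1).factorial : ℂ))⁻¹ • (z • H) ^ (2*k+1))
      (-((Complex.I * Real.sin (t/2)) • H)) := by
    have hs := ((Complex.hasSum_sin ((t : ℂ)/2)).mul_left (-Complex.I)).smul_const H
    rw [Complex.ofReal_sin, Complex.ofReal_div, Complex.ofReal_ofNat,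
      show -((Complex.I * Complex.sin ((t:ℂ)/2)) • H)
        = ((-Complex.I) * Complex.sin ((t:ℂ)/2)) • H by rw [neg_mul, neg_smul]]
    convert hs using 2 with k
    rw [smul_pow, hHo, smul_smul, pow_succ, pow_mul, hzsq]
    congr 1
    rw [neg_pow, ← pow_mul, hz]
    ring
  exact heven.even_add_odd hodd

/-- **Parameter-shift rule for expectation values.** For Hermitian `H` with `H² = I`,
`U(θ) = exp(-i(θ/2)H)`, observable `A` and state `ρ`, the function
`f(θ) = Tr[U(θ) ρ U(θ)† A]` has derivative
`(1/2)(Tr[U(θ+π/2) ρ U(θ+π/2)† A] - Tr[U(θ-π/2) ρ U(θ-π/2)† A])`. -/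
theorem parameter_shift_expectation (d : ℕ) (H : Matrix (Fin d) (Fin d) ℂ)
    (hH : H.IsHermitian) (hH2 : H ^ 2 = 1)
    (A ρ : Matrix (Fin d) (Fin d) ℂ) (θ : ℝ) :
    HasDerivAt (fun t : ℝ => (pauliRot H t * ρ * (pauliRot H t)ᴴ * A).trace)
      ((1 / 2 : ℂ) *
        ((pauliRot H (θ + Real.pi / 2) * ρ * (pauliRot H (θ + Real.pi / 2))ᴴ * A).trace
          - (pauliRot H (θ - Real.pi / 2) * ρ * (pauliRot H (θ - Real.pi / 2))ᴴ * A).trace)) θ := by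

  set a : ℂ := (ρ * A).trace with ha
  set b : ℂ := (H * (ρ * (H * A))).trace with hb
  set p : ℂ := (ρ * (H * A)).trace with hp
  set q : ℂ := (H * (ρ * A)).trace with hq
  set α : ℂ := (a + b) / 2 with hα
  set β : ℂ := (a - b) / 2 with hβ
  set γ : ℂ := Complex.I * (p - q) / 2 with hγ
  have hfun : ∀ t : ℝ, (pauliRot H t * ρ * (pauliRot H t)ᴴ * A).trace
      = α + β * Real.cos t + γ * Real.sin t := by
    intro t
    rw [pauliRot_eq H hH2 t]
    have hconj : ((Real.cos (t/2) : ℂ) • (1 : Matrix (Fin d) (Fin d) ℂ)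
        - (Complex.I * Real.sin (t/2)) • H)ᴴ
        = (Real.cos (t/2) : ℂ) • (1 : Matrix (Fin d) (Fin d) ℂ)
          + (Complex.I * Real.sin (t/2)) • H := by
      have h1 : star ((Real.cos (t/2) : ℂ)) = (Real.cos (t/2) : ℂ) := by
        rw [Complex.star_def, Complex.conj_ofReal]
      have h2 : star (Complex.I * (Real.sin (t/2) : ℂ))
          = -(Complex.I * (Real.sin (t/2) : ℂ)) := by
        rw [Complex.star_def, _root_.map_mul, Complex.conj_I, Complex.conj_ofReal]
        ring
      rw [conjTranspose_sub, conjTranspose_smul, conjTranspose_smul, conjTranspose_one,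
        hH.eq, h1, h2, neg_smul, sub_neg_eq_add]
    rw [hconj]
    simp only [Matrix.sub_mul, Matrix.mul_add, Matrix.mul_sub, Matrix.add_mul,
      smul_mul_assoc, Matrix.mul_smul, one_mul, Matrix.mul_one, trace_add, trace_sub,
      trace_smul, smul_eq_mul, smul_smul, mul_assoc]
    have hcos : (Real.cos t : ℂ) = 2 * (Real.cos (t/2) : ℂ)^2 - 1 := by
      rw [show t = 2 * (t/2) by ring, Real.cos_two_mul]
      push_cast
      ring_nf
    have hsin : (Real.sin t : ℂ) = 2 * (Real.sin (t/2) : ℂ) * (Real.cos (t/2) : ℂ) := by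
      rw [show t = 2 * (t/2) by ring, Real.sin_two_mul]
      push_cast
      ring_nf
    have hpyth : ((Real.sin (t/2) : ℂ))^2 + ((Real.cos (t/2) : ℂ))^2 = 1 := by
      rw [← Complex.ofReal_pow, ← Complex.ofReal_pow, ← Complex.ofReal_add,
        Real.sin_sq_add_cos_sq, Complex.ofReal_one]
    rw [← ha, ← hb, ← hp, ← hq, hα, hβ, hγ, hcos, hsin]
    linear_combination b * hpyth - b * ((Real.sin (t/2) : ℂ))^2 * Complex.I_sq
  have hder : HasDerivAt (fun t : ℝ => α + β * Real.cos t + γ * Real.sin t)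
      (β * (-(Real.sin θ) : ℝ) + γ * (Real.cos θ : ℝ)) θ := by
    have h1 : HasDerivAt (fun t : ℝ => ((Real.cos t : ℂ)))
        ((-(Real.sin θ) : ℝ) : ℂ) θ := (Real.hasDerivAt_cos θ).ofReal_comp
    have h2 : HasDerivAt (fun t : ℝ => ((Real.sin t : ℂ)))
        ((Real.cos θ : ℝ) : ℂ) θ := (Real.hasDerivAt_sin θ).ofReal_comp
    exact ((h1.const_mul β).const_add α).add (h2.const_mul γ)
  have hfe : (fun t : ℝ => (pauliRot H t * ρ * (pauliRot H t)ᴴ * A).trace)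
      = fun t : ℝ => α + β * Real.cos t + γ * Real.sin t := funext hfun
  rw [hfe, hfun (θ + Real.pi/2), hfun (θ - Real.pi/2)]
  convert hder using 1
  rw [Real.cos_add, Real.sin_add, Real.cos_sub, Real.sin_sub,
    Real.cos_pi_div_two, Real.sin_pi_div_two]
  push_cast
  ring
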